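/- arXiv:1606.07532 — 3 statements merged into one kernel-verified Lean document; each statement's English description precedes it below -/
import Mathlib

section
/- Let n, m be positive integers and let L : ℝ^m × (Fin n → ℝ^m) × (Fin n → Fin n → ℝ^m) → ℝ be a C³ function, L = L(u, p, q), such that ∂L/∂q_{ab}^i = ∂L/∂q_{ba}^i for all a, b, i (symmetry in the second-derivative slots). For smooth maps φ, ψ : ℝⁿ → ℝ^m write j_φ(x) = (φ(x), (∂_a φ(x)), (∂_a ∂_b φ(x))) for the second-jet evaluation. Then for every x ∈ ℝⁿ: (d/dt)|_{t=0} L(j_{φ+tψ}(x)) = Σ_i ψ^i(x) E_i[φ](x) + Σ_a ∂_a( Σ_i ψ^i · ((∂L/∂p_a^i)∘j_φ − Σ_b ∂_b((∂L/∂q_{ab}^i)∘j_φ)) + Σ_{i,b} ∂_b ψ^i · ((∂L/∂q_{ab}^i)∘j_φ) )(x), where E_i[φ] = (∂L/∂u^i)∘j_φ − Σ_a ∂_a((∂L/∂p_a^i)∘j_φ) + Σ_{a,b} ∂_a ∂_b((∂L/∂q_{ab}^i)∘j_φ) is the second-order Euler–Lagrange expression. This exhibits the explicit boundary current χ̂ =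 [ψ^i(∂L/∂p_a^i − ∂_b ∂L/∂q_{ab}^i) + ∂_b ψ^i ∂L/∂q_{ab}^i] of a second-order Lagrangian. -/
noncomputable section

open scoped BigOperators

/-- Partial derivative of `f : ℝⁿ → E` in the `a`-th coordinate direction. -/
def pd {n : ℕ} {E : Type*} [NormedAddCommGroup E] [NormedSpace ℝ E]
    (a : Fin n) (f : (Fin n → ℝ) → E) (x : Fin n → ℝ) : E :=
  fderiv ℝ f x (Pi.single a 1)

/-- The type of second jets `(u, p, q)`. -/
abbrev Jet2Space (n m : ℕ) :=
  (Fin m → ℝ) × (Fin n → Fin m → ℝ) × (Fin n → Fin n → Fin m → ℝ)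

/-- Second-jet evaluation `j_φ(x) = (φ(x), (∂_a φ(x)), (∂_a ∂_b φ(x)))`. -/
def jet2 {n m : ℕ} (φ : (Fin n → ℝ) → (Fin m → ℝ)) (x : Fin n → ℝ) :
    Jet2Space n m :=
  (φ x, fun a => pd a φ x, fun a b => pd a (fun y => pd b φ y) x)

/-- `∂L/∂u^i` for a second-order Lagrangian density `L = L(u, p, q)`. -/
def dLdu {n m : ℕ} (L : Jet2Space n m → ℝ) (i : Fin m) (upq : Jet2Space n m) : ℝ :=
  fderiv ℝ L upq (Pi.single i 1, 0, 0)

/-- `∂L/∂p_a^i` for a second-order Lagrangian density `L = L(u, p, q)`. -/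
def dLdp {n m : ℕ} (L : Jet2Space n m → ℝ) (a : Fin n) (i : Fin m)
    (upq : Jet2Space n m) : ℝ :=
  fderiv ℝ L upq (0, Pi.single a (Pi.single i 1), 0)

/-- `∂L/∂q_{ab}^i` for a second-order Lagrangian density `L = L(u, p, q)`. -/
def dLdq {n m : ℕ} (L : Jet2Space n m → ℝ) (a b : Fin n) (i : Fin m)
    (upq : Jet2Space n m) : ℝ :=
  fderiv ℝ L upq (0, 0, Pi.single a (Pi.single b (Pi.single i 1)))

/-- The second-order Euler–Lagrange expression
`E_i[φ] = ∂L/∂u^i − Σ_a ∂_a(∂L/∂p_a^i ∘ j_φ) + Σ_{a,b} ∂_a∂_b(∂L/∂q_{ab}^i ∘ j_φ)`. -/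
def EulerLagrange2 {n m : ℕ} (L : Jet2Space n m → ℝ)
    (φ : (Fin n → ℝ) → (Fin m → ℝ)) (i : Fin m) (x : Fin n → ℝ) : ℝ :=
  dLdu L i (jet2 φ x)
    - (∑ a, pd a (fun y => dLdp L a i (jet2 φ y)) x)
    + ∑ a, ∑ b, pd a (fun y => pd b (fun z => dLdq L a b i (jet2 φ z)) y) x

section AuxLemmas

variable {n m : ℕ} {E : Type*} [NormedAddCommGroup E] [NormedSpace ℝ E]

lemma contDiff_pd_top {f : (Fin n → ℝ) → E} (a : Fin n)
    (hf : ContDiff ℝ (⊤ : ℕ∞) f) : ContDiff ℝ (⊤ : ℕ∞) (fun x => pd a f x) := by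
  have h1 : ContDiff ℝ (⊤ : ℕ∞) (fderiv ℝ f) := hf.fderiv_right (by exact_mod_cast le_top)
  exact (ContinuousLinearMap.apply ℝ E (Pi.single a 1)).contDiff.comp h1

lemma contDiff_pd_one {f : (Fin n → ℝ) → E} (a : Fin n)
    (hf : ContDiff ℝ 2 f) : ContDiff ℝ 1 (fun x => pd a f x) := by
  have h1 : ContDiff ℝ 1 (fderiv ℝ f) := hf.fderiv_right (by norm_num)
  exact (ContinuousLinearMap.apply ℝ E (Pi.single a 1)).contDiff.comp h1

lemma pd_add {f g : (Fin n → ℝ) → E} (a : Fin n) {x : Fin n → ℝ}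
    (hf : DifferentiableAt ℝ f x) (hg : DifferentiableAt ℝ g x) :
    pd a (fun y => f y + g y) x = pd a f x + pd a g x := by
  unfold pd; rw [fderiv_fun_add hf hg]; rfl

lemma pd_smul (c : ℝ) {f : (Fin n → ℝ) → E} (a : Fin n) {x : Fin n → ℝ}
    (hf : DifferentiableAt ℝ f x) :
    pd a (fun y => c • f y) x = c • pd a f x := by
  unfold pd; rw [fderiv_fun_const_smul hf]; rfl

lemma pd_mul {f g : (Fin n → ℝ) → ℝ} (a : Fin n) {x : Fin n → ℝ}
    (hf : DifferentiableAt ℝ f x) (hg : DifferentiableAt ℝ g x) :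
    pd a (fun y => f y * g y) x = pd a f x * g x + f x * pd a g x := by
  unfold pd; rw [fderiv_fun_mul hf hg]
  simp [smul_eq_mul]; ring

lemma pd_sum {ι : Type*} (s : Finset ι) (f : ι → (Fin n → ℝ) → ℝ) (a : Fin n)
    {x : Fin n → ℝ} (hf : ∀ i ∈ s, DifferentiableAt ℝ (f i) x) :
    pd a (fun y => ∑ i ∈ s, f i y) x = ∑ i ∈ s, pd a (f i) x := by
  unfold pd; rw [fderiv_fun_sum hf]; simp

lemma pd_sub {f g : (Fin n → ℝ) → ℝ} (a : Fin n) {x : Fin n → ℝ}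
    (hf : DifferentiableAt ℝ f x) (hg : DifferentiableAt ℝ g x) :
    pd a (fun y => f y - g y) x = pd a f x - pd a g x := by
  unfold pd; rw [fderiv_fun_sub hf hg]; rfl

lemma pd_proj (a : Fin n) (i : Fin m) (f : (Fin n → ℝ) → (Fin m → ℝ))
    {x : Fin n → ℝ} (hf : DifferentiableAt ℝ f x) :
    pd a (fun y => f y i) x = pd a f x i := by
  unfold pd
  have h := (((ContinuousLinearMap.proj (R := ℝ) (φ := fun _ : Fin m => ℝ) i)
    ).hasFDerivAt.comp x hf.hasFDerivAt).fderiv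
  rw [show (fun y => f y i)
      = (⇑(ContinuousLinearMap.proj (R := ℝ) (φ := fun _ : Fin m => ℝ) i)) ∘ f from rfl,
    h]
  rfl

lemma clm_expand {n m : ℕ} (ℓ : Jet2Space n m →L[ℝ] ℝ) (v : Jet2Space n m) :
    ℓ v = (∑ i, v.1 i * ℓ (Pi.single i 1, 0, 0))
      + (∑ a, ∑ i, v.2.1 a i * ℓ (0, Pi.single a (Pi.single i 1), 0))
      + ∑ a, ∑ b, ∑ i, v.2.2 a b i * ℓ (0, 0, Pi.single a (Pi.single b (Pi.single i 1))) := by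
  have hv : v = (∑ i, v.1 i • (((Pi.single i 1 : Fin m → ℝ), 0, 0) : Jet2Space n m))
      + (∑ a, ∑ i, v.2.1 a i • ((0, Pi.single a (Pi.single i 1), 0) : Jet2Space n m))
      + ∑ a, ∑ b, ∑ i, v.2.2 a b i •
          ((0, 0, Pi.single a (Pi.single b (Pi.single i 1))) : Jet2Space n m) := by
    refine Prod.ext ?_ (Prod.ext ?_ ?_)
    · simp only [Prod.fst_sum, Prod.fst_add, Prod.smul_fst, Prod.snd_add, Prod.snd_sum]
      funext j
      simp [Finset.sum_apply, Pi.single_apply]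
    · simp only [Prod.fst_sum, Prod.fst_add, Prod.smul_fst, Prod.snd_add, Prod.snd_sum,
        Prod.smul_snd]
      funext a' i'
      simp [Finset.sum_apply, Pi.single_apply, ite_apply, Finset.sum_ite_eq,
        Finset.sum_ite_eq']
    · simp only [Prod.fst_sum, Prod.fst_add, Prod.smul_fst, Prod.snd_add, Prod.snd_sum,
        Prod.smul_snd]
      funext a' b' i'
      simp [Finset.sum_apply, Pi.single_apply, ite_apply, Finset.sum_ite_eq,
        Finset.sum_ite_eq']
  conv_lhs => rw [hv]
  simp only [map_add, map_sum, map_smul, smul_eq_mul]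

lemma contDiff_jet2 {φ : (Fin n → ℝ) → (Fin m → ℝ)} (hφ : ContDiff ℝ (⊤ : ℕ∞) φ) :
    ContDiff ℝ (⊤ : ℕ∞) (jet2 φ) := by
  refine hφ.prodMk (ContDiff.prodMk ?_ ?_)
  · exact contDiff_pi.mpr fun a => contDiff_pd_top a hφ
  · exact contDiff_pi.mpr fun a => contDiff_pi.mpr fun b =>
      contDiff_pd_top a (contDiff_pd_top b hφ)

lemma jet2_add_smul {φ ψ : (Fin n → ℝ) → (Fin m → ℝ)}
    (hφ : ContDiff ℝ (⊤ : ℕ∞) φ) (hψ : ContDiff ℝ (⊤ : ℕ∞) ψ) (t : ℝ) (x : Fin n → ℝ) :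
    jet2 (fun y => φ y + t • ψ y) x = jet2 φ x + t • jet2 ψ x := by
  have hφd := hφ.differentiable (by simp)
  have hψd := hψ.differentiable (by simp)
  have h1 : ∀ (b : Fin n) (y : Fin n → ℝ),
      pd b (fun z => φ z + t • ψ z) y = pd b φ y + t • pd b ψ y := by
    intro b y
    rw [pd_add b (g := fun z => t • ψ z) (hφd y) ((hψd y).const_smul t), pd_smul t b (hψd y)]
  refine Prod.ext ?_ (Prod.ext ?_ ?_)
  · rfl
  · funext a
    exact h1 a x
  · funext a b
    have h2 : (fun y => pd b (fun z => φ z + t • ψ z) y)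
        = fun y => pd b φ y + t • pd b ψ y := funext (h1 b)
    show pd a (fun y => pd b (fun z => φ z + t • ψ z) y) x = _
    rw [h2, pd_add a (g := fun y => t • pd b ψ y) ((contDiff_pd_top b hφ).differentiable (by simp) x)
      (((contDiff_pd_top b hψ).differentiable (by simp) x).const_smul t),
      pd_smul t a ((contDiff_pd_top b hψ).differentiable (by simp) x)]
    rfl

lemma lhs_eval {φ ψ : (Fin n → ℝ) → (Fin m → ℝ)} {L : Jet2Space n m → ℝ}
    (hL : ContDiff ℝ 3 L)
    (hφ : ContDiff ℝ (⊤ : ℕ∞) φ) (hψ : ContDiff ℝ (⊤ : ℕ∞) ψ) (x : Fin n → ℝ) :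
    deriv (fun t : ℝ => L (jet2 (fun y => φ y + t • ψ y) x)) 0
      = fderiv ℝ L (jet2 φ x) (jet2 ψ x) := by
  have hf : (fun t : ℝ => L (jet2 (fun y => φ y + t • ψ y) x))
      = fun t : ℝ => L (jet2 φ x + t • jet2 ψ x) :=
    funext fun t => congrArg L (jet2_add_smul hφ hψ t x)
  rw [hf]
  have h1 : HasDerivAt (fun t : ℝ => jet2 φ x + t • jet2 ψ x) (jet2 ψ x) 0 := by
    simpa using ((hasDerivAt_id (0:ℝ)).smul_const (jet2 ψ x)).const_add (jet2 φ x)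
  have h2 : HasFDerivAt L (fderiv ℝ L (jet2 φ x)) (jet2 φ x) :=
    ((hL.differentiable (by norm_num)) (jet2 φ x)).hasFDerivAt
  have h3 : HasDerivAt (fun t : ℝ => L (jet2 φ x + t • jet2 ψ x))
      (fderiv ℝ L (jet2 φ x) (jet2 ψ x)) 0 := by
    have h2' : HasFDerivAt L (fderiv ℝ L (jet2 φ x)) (jet2 φ x + (0:ℝ) • jet2 ψ x) := by
      simpa using h2
    have := h2'.comp_hasDerivAt (0:ℝ) h1
    exact this
  exact h3.deriv

lemma algebra_core {n m : ℕ}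
    (ψx U : Fin m → ℝ) (dψ P dP : Fin n → Fin m → ℝ)
    (DQ pdDQ Qv d2ψ dQa : Fin n → Fin n → Fin m → ℝ)
    (hsym : ∀ a b i, dQa a b i = DQ b a i) :
    (∑ i, ψx i * U i) + (∑ a, ∑ i, dψ a i * P a i)
        + (∑ a, ∑ b, ∑ i, d2ψ a b i * Qv a b i)
      = (∑ i, ψx i * (U i - (∑ a, dP a i) + ∑ a, ∑ b, pdDQ a b i))
        + ∑ a, ((∑ i, (dψ a i * (P a i - ∑ b, DQ a b i)
              + ψx i * (dP a i - ∑ b, pdDQ a b i)))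
          + ∑ i, ∑ b, (d2ψ a b i * Qv a b i + dψ b i * dQa a b i)) := by
  simp only [hsym]
  have h1 : (∑ i, ψx i * (U i - (∑ a, dP a i) + ∑ a, ∑ b, pdDQ a b i))
      = (∑ i, ψx i * U i) - (∑ a, ∑ i, ψx i * dP a i)
        + ∑ a, ∑ i, ∑ b, ψx i * pdDQ a b i := by
    have e : ∀ i : Fin m, ψx i * (U i - (∑ a, dP a i) + ∑ a, ∑ b, pdDQ a b i)
        = ψx i * U i - (∑ a, ψx i * dP a i) + ∑ a, ∑ b, ψx i * pdDQ a b i := by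
      intro i
      rw [mul_add, mul_sub, Finset.mul_sum]
      congr 1
      rw [Finset.mul_sum]
      refine Finset.sum_congr rfl fun a _ => ?_
      rw [Finset.mul_sum]
    rw [Finset.sum_congr rfl fun i _ => e i, Finset.sum_add_distrib,
      Finset.sum_sub_distrib]
    rw [Finset.sum_comm (f := fun i a => ψx i * dP a i),
      Finset.sum_comm (f := fun i a => ∑ b, ψx i * pdDQ a b i)]
  have h2 : ∀ a : Fin n,
      (∑ i, (dψ a i * (P a i - ∑ b, DQ a b i) + ψx i * (dP a i - ∑ b, pdDQ a b i)))
      = ((∑ i, dψ a i * P a i) - ∑ i, ∑ b, dψ a i * DQ a b i)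
        + ((∑ i, ψx i * dP a i) - ∑ i, ∑ b, ψx i * pdDQ a b i) := by
    intro a
    have e : ∀ i : Fin m,
        dψ a i * (P a i - ∑ b, DQ a b i) + ψx i * (dP a i - ∑ b, pdDQ a b i)
        = (dψ a i * P a i - ∑ b, dψ a i * DQ a b i)
          + (ψx i * dP a i - ∑ b, ψx i * pdDQ a b i) := by
      intro i
      rw [mul_sub, mul_sub, Finset.mul_sum, Finset.mul_sum]
    rw [Finset.sum_congr rfl fun i _ => e i, Finset.sum_add_distrib,
      Finset.sum_sub_distrib, Finset.sum_sub_distrib]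
  have h3 : ∀ a : Fin n,
      (∑ i, ∑ b, (d2ψ a b i * Qv a b i + dψ b i * DQ b a i))
      = (∑ b, ∑ i, d2ψ a b i * Qv a b i) + ∑ i, ∑ b, dψ b i * DQ b a i := by
    intro a
    rw [Finset.sum_congr rfl fun i (_ : i ∈ Finset.univ) => Finset.sum_add_distrib,
      Finset.sum_add_distrib,
      Finset.sum_comm (f := fun i b => d2ψ a b i * Qv a b i)]
  have key : (∑ a, ∑ i, ∑ b, dψ b i * DQ b a i)
      = ∑ a, ∑ i, ∑ b, dψ a i * DQ a b i := by
    rw [Finset.sum_comm]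
    refine Eq.trans (Finset.sum_congr rfl fun i _ => Finset.sum_comm ..) ?_
    rw [Finset.sum_comm]
  have h4 : (∑ a, (((∑ i, dψ a i * P a i) - ∑ i, ∑ b, dψ a i * DQ a b i)
        + ((∑ i, ψx i * dP a i) - ∑ i, ∑ b, ψx i * pdDQ a b i)
        + ((∑ b, ∑ i, d2ψ a b i * Qv a b i) + ∑ i, ∑ b, dψ b i * DQ b a i)))
      = ((∑ a, ∑ i, dψ a i * P a i) - ∑ a, ∑ i, ∑ b, dψ a i * DQ a b i)
        + ((∑ a, ∑ i, ψx i * dP a i) - ∑ a, ∑ i, ∑ b, ψx i * pdDQ a b i)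
        + ((∑ a, ∑ b, ∑ i, d2ψ a b i * Qv a b i)
          + ∑ a, ∑ i, ∑ b, dψ b i * DQ b a i) := by
    rw [Finset.sum_add_distrib, Finset.sum_add_distrib, Finset.sum_sub_distrib,
      Finset.sum_sub_distrib, Finset.sum_add_distrib]
  calc (∑ i, ψx i * U i) + (∑ a, ∑ i, dψ a i * P a i)
        + (∑ a, ∑ b, ∑ i, d2ψ a b i * Qv a b i)
      = ((∑ i, ψx i * U i) - (∑ a, ∑ i, ψx i * dP a i)
          + ∑ a, ∑ i, ∑ b, ψx i * pdDQ a b i)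
        + (((∑ a, ∑ i, dψ a i * P a i) - ∑ a, ∑ i, ∑ b, dψ a i * DQ a b i)
          + ((∑ a, ∑ i, ψx i * dP a i) - ∑ a, ∑ i, ∑ b, ψx i * pdDQ a b i)
          + ((∑ a, ∑ b, ∑ i, d2ψ a b i * Qv a b i)
            + ∑ a, ∑ i, ∑ b, dψ b i * DQ b a i)) := by
        rw [key]; ring
    _ = _ := by
        rw [h1, ← h4]
        congr 1
        refine Finset.sum_congr rfl fun a _ => ?_
        rw [h2 a, h3 a]

end AuxLemmas

/-- the first-variation identity for a second-order Lagrangian, with the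
explicit boundary current
`χ̂^a = ψ^i (∂L/∂p_a^i − ∂_b ∂L/∂q_{ab}^i) + ∂_b ψ^i ∂L/∂q_{ab}^i`. -/
theorem first_variation_second_order (n m : ℕ) (hn : 0 < n) (hm : 0 < m)
    (L : Jet2Space n m → ℝ) (hL : ContDiff ℝ 3 L)
    (hsymm : ∀ (upq : Jet2Space n m) (a b : Fin n) (i : Fin m),
      dLdq L a b i upq = dLdq L b a i upq)
    (φ ψ : (Fin n → ℝ) → (Fin m → ℝ))
    (hφ : ContDiff ℝ (⊤ : ℕ∞) φ) (hψ : ContDiff ℝ (⊤ : ℕ∞) ψ)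
    (x : Fin n → ℝ) :
    deriv (fun t : ℝ => L (jet2 (fun y => φ y + t • ψ y) x)) 0
      = (∑ i, ψ x i * EulerLagrange2 L φ i x)
        + ∑ a, pd a (fun y =>
            (∑ i, ψ y i *
              (dLdp L a i (jet2 φ y)
                - ∑ b, pd b (fun z => dLdq L a b i (jet2 φ z)) y))
            + ∑ i, ∑ b, pd b (fun z => ψ z i) y * dLdq L a b i (jet2 φ y)) x := by
  -- basic smoothness facts
  have hjet : ContDiff ℝ (⊤ : ℕ∞) (jet2 φ) := contDiff_jet2 hφ
  have hjet2 : ContDiff ℝ 2 (jet2 φ) := hjet.of_le (WithTop.coe_le_coe.mpr le_top)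
  have hfd2 : ContDiff ℝ 2 (fderiv ℝ L) := hL.fderiv_right (by norm_num)
  have hUc : ∀ i : Fin m, ContDiff ℝ 2 (fun y => dLdu L i (jet2 φ y)) := by
    intro i
    have h0 : ContDiff ℝ 2 (dLdu L i) :=
      (ContinuousLinearMap.apply ℝ ℝ
        (((Pi.single i 1 : Fin m → ℝ), 0, 0) : Jet2Space n m)).contDiff.comp hfd2
    exact h0.comp hjet2
  have hPc : ∀ (a : Fin n) (i : Fin m),
      ContDiff ℝ 2 (fun y => dLdp L a i (jet2 φ y)) := by
    intro a i
    have h0 : ContDiff ℝ 2 (dLdp L a i) :=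
      (ContinuousLinearMap.apply ℝ ℝ
        ((0, Pi.single a (Pi.single i 1), 0) : Jet2Space n m)).contDiff.comp hfd2
    exact h0.comp hjet2
  have hQc : ∀ (a b : Fin n) (i : Fin m),
      ContDiff ℝ 2 (fun y => dLdq L a b i (jet2 φ y)) := by
    intro a b i
    have h0 : ContDiff ℝ 2 (dLdq L a b i) :=
      (ContinuousLinearMap.apply ℝ ℝ
        ((0, 0, Pi.single a (Pi.single b (Pi.single i 1))) : Jet2Space n m)).contDiff.comp
        hfd2
    exact h0.comp hjet2
  have hψi : ∀ i : Fin m, ContDiff ℝ (⊤ : ℕ∞) (fun z => ψ z i) := fun i => contDiff_pi.mp hψ i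
  have hψid : ∀ (i : Fin m) (y : Fin n → ℝ), DifferentiableAt ℝ (fun z => ψ z i) y :=
    fun i y => (hψi i).differentiable (by simp) y
  have hDψd : ∀ (b : Fin n) (i : Fin m) (y : Fin n → ℝ),
      DifferentiableAt ℝ (fun z => pd b (fun w => ψ w i) z) y :=
    fun b i y => (contDiff_pd_top b (hψi i)).differentiable (by simp) y
  have hPd : ∀ (a : Fin n) (i : Fin m) (y : Fin n → ℝ),
      DifferentiableAt ℝ (fun z => dLdp L a i (jet2 φ z)) y :=
    fun a i y => (hPc a i).differentiable (by norm_num) y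
  have hQd : ∀ (a b : Fin n) (i : Fin m) (y : Fin n → ℝ),
      DifferentiableAt ℝ (fun z => dLdq L a b i (jet2 φ z)) y :=
    fun a b i y => (hQc a b i).differentiable (by norm_num) y
  have hDQd : ∀ (a b : Fin n) (i : Fin m) (y : Fin n → ℝ),
      DifferentiableAt ℝ (fun z => pd b (fun w => dLdq L a b i (jet2 φ w)) z) y :=
    fun a b i y => (contDiff_pd_one b (hQc a b i)).differentiable one_ne_zero y
  -- components of jet2 ψ
  have hc2 : ∀ (a : Fin n) (i : Fin m),
      (jet2 ψ x).2.1 a i = pd a (fun z => ψ z i) x :=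
    fun a i => (pd_proj a i ψ ((hψ.differentiable (by simp)) x)).symm
  have hc3 : ∀ (a b : Fin n) (i : Fin m),
      (jet2 ψ x).2.2 a b i = pd a (fun y => pd b (fun z => ψ z i) y) x := by
    intro a b i
    have h0 : (fun y => pd b ψ y i) = fun y => pd b (fun z => ψ z i) y :=
      funext fun y => (pd_proj b i ψ ((hψ.differentiable (by simp)) y)).symm
    calc (jet2 ψ x).2.2 a b i = pd a (fun y => pd b ψ y) x i := rfl
      _ = pd a (fun y => pd b ψ y i) x :=
          (pd_proj a i (fun y => pd b ψ y)
            ((contDiff_pd_top b hψ).differentiable (by simp) x)).symm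
      _ = pd a (fun y => pd b (fun z => ψ z i) y) x := by rw [h0]
  -- expansion of the left-hand side
  have hLHS : (fderiv ℝ L (jet2 φ x)) (jet2 ψ x)
      = (∑ i, ψ x i * dLdu L i (jet2 φ x))
        + (∑ a, ∑ i, pd a (fun z => ψ z i) x * dLdp L a i (jet2 φ x))
        + ∑ a, ∑ b, ∑ i,
            pd a (fun y => pd b (fun z => ψ z i) y) x * dLdq L a b i (jet2 φ x) := by
    rw [clm_expand]
    congr 1
    · congr 1
      · exact Finset.sum_congr rfl fun a _ =>
          Finset.sum_congr rfl fun i _ => by rw [hc2]; exact rfl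
    · exact Finset.sum_congr rfl fun a _ => Finset.sum_congr rfl fun b _ =>
        Finset.sum_congr rfl fun i _ => by rw [hc3]; exact rfl
  -- expansion of the boundary-current terms
  have hG : ∀ a : Fin n, pd a (fun y =>
        (∑ i, ψ y i * (dLdp L a i (jet2 φ y)
          - ∑ b, pd b (fun z => dLdq L a b i (jet2 φ z)) y))
        + ∑ i, ∑ b, pd b (fun z => ψ z i) y * dLdq L a b i (jet2 φ y)) x
      = (∑ i, (pd a (fun z => ψ z i) x
            * (dLdp L a i (jet2 φ x) - ∑ b, pd b (fun z => dLdq L a b i (jet2 φ z)) x)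
          + ψ x i * (pd a (fun y => dLdp L a i (jet2 φ y)) x
            - ∑ b, pd a (fun y => pd b (fun z => dLdq L a b i (jet2 φ z)) y) x)))
        + ∑ i, ∑ b, (pd a (fun y => pd b (fun z => ψ z i) y) x * dLdq L a b i (jet2 φ x)
          + pd b (fun z => ψ z i) x * pd a (fun y => dLdq L a b i (jet2 φ y)) x) := by
    intro a
    have hsub : ∀ (i : Fin m) (y : Fin n → ℝ), DifferentiableAt ℝ
        (fun z => dLdp L a i (jet2 φ z)
          - ∑ b, pd b (fun w => dLdq L a b i (jet2 φ w)) z) y :=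
      fun i y => (hPd a i y).sub (DifferentiableAt.fun_sum fun b _ => hDQd a b i y)
    have hterm1 : ∀ (i : Fin m) (y : Fin n → ℝ), DifferentiableAt ℝ
        (fun z => ψ z i * (dLdp L a i (jet2 φ z)
          - ∑ b, pd b (fun w => dLdq L a b i (jet2 φ w)) z)) y :=
      fun i y => (hψid i y).mul (hsub i y)
    have hterm2 : ∀ (i : Fin m) (b : Fin n) (y : Fin n → ℝ), DifferentiableAt ℝ
        (fun z => pd b (fun w => ψ w i) z * dLdq L a b i (jet2 φ z)) y :=
      fun i b y => (hDψd b i y).mul (hQd a b i y)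
    rw [pd_add a
      (DifferentiableAt.fun_sum fun i _ => hterm1 i x)
      (DifferentiableAt.fun_sum fun i _ =>
        (DifferentiableAt.fun_sum fun b _ => hterm2 i b x)),
      pd_sum Finset.univ _ a (fun i _ => hterm1 i x),
      pd_sum Finset.univ _ a (fun i _ =>
        (DifferentiableAt.fun_sum fun b _ => hterm2 i b x))]
    congr 1
    · refine Finset.sum_congr rfl fun i _ => ?_
      rw [pd_mul a (hψid i x) (hsub i x),
        pd_sub a (hPd a i x) (DifferentiableAt.fun_sum fun b _ => hDQd a b i x),
        pd_sum Finset.univ _ a (fun b _ => hDQd a b i x)]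
    · refine Finset.sum_congr rfl fun i _ => ?_
      rw [pd_sum Finset.univ _ a (fun b _ => hterm2 i b x)]
      refine Finset.sum_congr rfl fun b _ => ?_
      rw [pd_mul a (hDψd b i x) (hQd a b i x)]
  -- put everything together
  rw [lhs_eval hL hφ hψ x, hLHS]
  simp only [hG, EulerLagrange2]
  exact algebra_core (fun i => ψ x i) (fun i => dLdu L i (jet2 φ x))
    (fun a i => pd a (fun z => ψ z i) x)
    (fun a i => dLdp L a i (jet2 φ x))
    (fun a i => pd a (fun y => dLdp L a i (jet2 φ y)) x)
    (fun a b i => pd b (fun z => dLdq L a b i (jet2 φ z)) x)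
    (fun a b i => pd a (fun y => pd b (fun z => dLdq L a b i (jet2 φ z)) y) x)
    (fun a b i => dLdq L a b i (jet2 φ x))
    (fun a b i => pd a (fun y => pd b (fun z => ψ z i) y) x)
    (fun a b i => pd a (fun y => dLdq L a b i (jet2 φ y)) x)
    (fun a b i => congrArg (fun f => pd a f x)
      (funext fun z => hsymm (jet2 φ z) a b i))

end
end

section
/- Let n, m be positive integers, and let V_i^a : ℝ^m → ℝ and H : ℝ^m → ℝ be smooth; set σ_{ij}^a = ∂_i V_j^a − ∂_j V_i^a. Suppose φ : ℝⁿ → ℝ^m is a smooth solution of the multisymplectic Euler–Lagrange equations Σ_{a,j} σ_{ij}^a(φ(x)) ∂_a φ^j(x) = (∂H/∂u^i)(φ(x)) for all i and all x. Suppose X : ℝ^m → ℝ^m (a symmetry vector field) and N^a : ℝ^m → ℝ (a = 1,…,n) are smooth functions satisfying, identically on ℝ^m, (i) Σ_i X^i σ_{ij}^a = ∂_j N^a for every a and j (i.e. the contraction of X with each presymplectic 2-form σ^a is exact with potential N^a), and (ii) Σ_i X^i ∂_i H = 0 (X preserves the covariant Hamiltonian). Then the current J^a(x) = N^a(φ(x))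 is conserved: Σ_a ∂_a J^a(x) = 0 for all x ∈ ℝⁿ. -/
noncomputable section

open scoped BigOperators

/-- The presymplectic coefficients `σ_{ij}^a = ∂_i V_j^a − ∂_j V_i^a`. -/
def presymp {n m : ℕ} (V : Fin n → Fin m → (Fin m → ℝ) → ℝ)
    (a : Fin n) (i j : Fin m) (u : Fin m → ℝ) : ℝ :=
  pd i (V a j) u - pd j (V a i) u

lemma lin_expand {m : ℕ} (L : (Fin m → ℝ) →L[ℝ] ℝ) (w : Fin m → ℝ) :
    L w = ∑ j, w j * L (Pi.single j 1) := by
  have hw : w = ∑ j, w j • (Pi.single j 1 : Fin m → ℝ) := by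
    funext k
    simp [Finset.sum_apply, Pi.single_apply, mul_comm]
  conv_lhs => rw [hw]
  rw [map_sum]
  simp [smul_eq_mul, mul_comm]

lemma chain {n m : ℕ} (f : (Fin m → ℝ) → ℝ) (hf : ContDiff ℝ (⊤ : ℕ∞) f)
    (φ : (Fin n → ℝ) → (Fin m → ℝ)) (hφ : ContDiff ℝ (⊤ : ℕ∞) φ)
    (a : Fin n) (x : Fin n → ℝ) :
    pd a (fun y => f (φ y)) x = ∑ j, pd j f (φ x) * pd a (fun y => φ y j) x := by
  have hfd := (hf.differentiable (by simp)).differentiableAt (x := φ x)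
  have hφd := (hφ.differentiable (by simp)).differentiableAt (x := x)
  have hc : fderiv ℝ (fun y => f (φ y)) x =
      (fderiv ℝ f (φ x)).comp (fderiv ℝ φ x) := fderiv_comp x hfd hφd
  have hproj : ∀ j : Fin m, pd a (fun y => φ y j) x = fderiv ℝ φ x (Pi.single a 1) j := by
    intro j
    have : fderiv ℝ (fun y => φ y j) x =
        (ContinuousLinearMap.proj j).comp (fderiv ℝ φ x) :=
      ((ContinuousLinearMap.proj j : (Fin m → ℝ) →L[ℝ] ℝ).hasFDerivAt.comp x
        hφd.hasFDerivAt).fderiv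
    simp [pd, this]
  unfold pd
  rw [hc]
  simp only [ContinuousLinearMap.comp_apply]
  rw [lin_expand]
  congr 1
  funext j
  simp only [pd] at hproj
  rw [hproj j]
  ring

/-- a symmetry `X` compatible with the presymplectic structure
(`ι_X σ^a = dN^a` and `X H = 0`) yields the conserved current `J^a = N^a ∘ φ`
on any solution `φ` of the multisymplectic Euler–Lagrange equations. -/
theorem presymplectic_noether (n m : ℕ) (hn : 0 < n) (hm : 0 < m)
    (V : Fin n → Fin m → (Fin m → ℝ) → ℝ) (H : (Fin m → ℝ) → ℝ)
    (hV : ∀ a i, ContDiff ℝ (⊤ : ℕ∞) (V a i)) (hH : ContDiff ℝ (⊤ : ℕ∞) H)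
    (φ : (Fin n → ℝ) → (Fin m → ℝ)) (hφ : ContDiff ℝ (⊤ : ℕ∞) φ)
    (hsol : ∀ (i : Fin m) (x : Fin n → ℝ),
      ∑ a, ∑ j, presymp V a i j (φ x) * pd a (fun y => φ y j) x = pd i H (φ x))
    (X : (Fin m → ℝ) → (Fin m → ℝ)) (hX : ContDiff ℝ (⊤ : ℕ∞) X)
    (N : Fin n → (Fin m → ℝ) → ℝ) (hN : ∀ a, ContDiff ℝ (⊤ : ℕ∞) (N a))
    (hXσ : ∀ (a : Fin n) (j : Fin m) (u : Fin m → ℝ),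
      ∑ i, X u i * presymp V a i j u = pd j (N a) u)
    (hXH : ∀ u : Fin m → ℝ, ∑ i, X u i * pd i H u = 0) :
    ∀ x : Fin n → ℝ, ∑ a, pd a (fun y => N a (φ y)) x = 0 := by
  intro x
  calc ∑ a, pd a (fun y => N a (φ y)) x
      = ∑ a, ∑ j, pd j (N a) (φ x) * pd a (fun y => φ y j) x :=
        Finset.sum_congr rfl (fun a _ => chain (N a) (hN a) φ hφ a x)
    _ = ∑ a, ∑ j, (∑ i, X (φ x) i * presymp V a i j (φ x)) * pd a (fun y => φ y j) x := by
        simp_rw [hXσ]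
    _ = ∑ i, X (φ x) i * ∑ a, ∑ j, presymp V a i j (φ x) * pd a (fun y => φ y j) x := by
        simp only [Finset.sum_mul, Finset.mul_sum, mul_assoc]
        rw [Finset.sum_congr rfl (fun a _ => Finset.sum_comm), Finset.sum_comm]
    _ = ∑ i, X (φ x) i * pd i H (φ x) := by simp_rw [hsol]
    _ = 0 := hXH (φ x)

end
end

section
/- Let n be a positive integer. For smooth fields φ, w : ℝⁿ → ℝ and u, v : ℝⁿ → ℝⁿ consider the first-order density I[φ,u,w,v](x) = −Σ_a v_a(x)(∂_a φ(x) − u_a(x)) + w(x) Σ_a ∂_a u_a(x) − ½ w(x)², whose Euler–Lagrange system is: ∂_a φ = u_a for all a (variation in v), v_a = ∂_a w for all a (variation in u), Σ_a ∂_a u_a = w (variation in w), and Σ_a ∂_a v_a = 0 (variation in φ). Then a quadruple (φ, u, w, v) of smooth fields satisfies this system if and only if u = ∇φ, w = Δφ, v = ∇(Δφ), and Δ(Δφ) = 0, where Δ = Σ_a ∂_a∂_a is the Laplacian. Moreover, for any such solution the density evaluates on shell to I = ½ (Δφ)². Hence the first-order system obtained from the intrinsic Lagrangian of the polywave equation is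 equivalent to the equation Δ²φ = 0, with all auxiliary fields u, w, v uniquely expressed through φ. -/
noncomputable section

open scoped BigOperators

/-- The Laplacian `Δf = Σ_a ∂_a ∂_a f`. -/
def lap {n : ℕ} (f : (Fin n → ℝ) → ℝ) (x : Fin n → ℝ) : ℝ :=
  ∑ a, pd a (fun y => pd a f y) x

/-- The intrinsic first-order density of the polywave equation,
`I[φ,u,w,v] = −Σ_a v_a (∂_a φ − u_a) + w Σ_a ∂_a u_a − ½ w²`. -/
def polywaveDensity {n : ℕ} (φ w : (Fin n → ℝ) → ℝ)
    (u v : (Fin n → ℝ) → (Fin n → ℝ)) (x : Fin n → ℝ) : ℝ :=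
  (- ∑ a, v x a * (pd a φ x - u x a))
    + w x * (∑ a, pd a (fun y => u y a) x) - (1 / 2) * (w x) ^ 2

/-- The Euler–Lagrange system of `polywaveDensity`: `∂_a φ = u_a`, `v_a = ∂_a w`,
`Σ_a ∂_a u_a = w` and `Σ_a ∂_a v_a = 0`. -/
def PolywaveSystem {n : ℕ} (φ w : (Fin n → ℝ) → ℝ)
    (u v : (Fin n → ℝ) → (Fin n → ℝ)) : Prop :=
  (∀ (x : Fin n → ℝ) (a : Fin n), pd a φ x = u x a)
    ∧ (∀ (x : Fin n → ℝ) (a : Fin n), v x a = pd a w x)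
    ∧ (∀ x : Fin n → ℝ, ∑ a, pd a (fun y => u y a) x = w x)
    ∧ (∀ x : Fin n → ℝ, ∑ a, pd a (fun y => v y a) x = 0)

/-- the first-order system of the intrinsic Lagrangian of the polywave
equation holds iff `u = ∇φ`, `w = Δφ`, `v = ∇(Δφ)` and `Δ²φ = 0`; moreover on any
solution the density evaluates to `½ (Δφ)²`. -/
theorem polywave_intrinsic_equivalence (n : ℕ) (hn : 0 < n)
    (φ w : (Fin n → ℝ) → ℝ) (u v : (Fin n → ℝ) → (Fin n → ℝ))
    (hφ : ContDiff ℝ (⊤ : ℕ∞) φ) (hw : ContDiff ℝ (⊤ : ℕ∞) w)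
    (hu : ContDiff ℝ (⊤ : ℕ∞) u) (hv : ContDiff ℝ (⊤ : ℕ∞) v) :
    (PolywaveSystem φ w u v ↔
      ((∀ (x : Fin n → ℝ) (a : Fin n), u x a = pd a φ x)
        ∧ (∀ x : Fin n → ℝ, w x = lap φ x)
        ∧ (∀ (x : Fin n → ℝ) (a : Fin n), v x a = pd a (fun y => lap φ y) x)
        ∧ (∀ x : Fin n → ℝ, lap (fun y => lap φ y) x = 0)))
    ∧ (PolywaveSystem φ w u v →
        ∀ x : Fin n → ℝ, polywaveDensity φ w u v x = (1 / 2) * (lap φ x) ^ 2) := by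
  have main : PolywaveSystem φ w u v →
      ((∀ (x : Fin n → ℝ) (a : Fin n), u x a = pd a φ x)
        ∧ (∀ x : Fin n → ℝ, w x = lap φ x)
        ∧ (∀ (x : Fin n → ℝ) (a : Fin n), v x a = pd a (fun y => lap φ y) x)
        ∧ (∀ x : Fin n → ℝ, lap (fun y => lap φ y) x = 0)) := by
    rintro ⟨h1, h2, h3, h4⟩
    have hufun : ∀ a : Fin n, (fun y => u y a) = fun y => pd a φ y :=
      fun a => funext fun y => (h1 y a).symm
    have hw' : ∀ x, w x = lap φ x := by
      intro x
      rw [← h3 x]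
      unfold lap
      simp only [hufun]
    have hwfun : w = fun y => lap φ y := funext hw'
    have hv' : ∀ (x : Fin n → ℝ) (a : Fin n), v x a = pd a (fun y => lap φ y) x := by
      intro x a
      rw [h2 x a, hwfun]
    refine ⟨fun x a => (h1 x a).symm, hw', hv', ?_⟩
    intro x
    rw [← hwfun]
    have hpd : ∀ a : Fin n, (fun y => pd a w y) = fun y => v y a :=
      fun a => funext fun y => (h2 y a).symm
    unfold lap
    simp only [hpd]
    exact h4 x
  constructor
  · constructor
    · exact main
    · rintro ⟨g1, g2, g3, g4⟩
      have hwfun : w = fun y => lap φ y := funext g2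
      refine ⟨fun x a => (g1 x a).symm, ?_, ?_, ?_⟩
      · intro x a
        rw [hwfun]
        exact g3 x a
      · intro x
        have hufun : ∀ a : Fin n, (fun y => u y a) = fun y => pd a φ y :=
          fun a => funext fun y => g1 y a
        simp only [hufun]
        exact (g2 x).symm
      · intro x
        have hvfun : ∀ a : Fin n, (fun y => v y a)
            = fun y => pd a (fun z => lap φ z) y :=
          fun a => funext fun y => g3 y a
        simp only [hvfun]
        exact g4 x
  · intro hsys x
    obtain ⟨h1, h2, h3, h4⟩ := hsys
    have hw' := (main ⟨h1, h2, h3, h4⟩).2.1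
    unfold polywaveDensity
    rw [h3 x, ← hw' x]
    simp only [h1]
    simp
    ring

end
end
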